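/- For every pair (i, j) with 1 ≤ i ≤ s and 1 ≤ j ≤ r_i, the image of the variable T_{ij} in the quotient ring A[𝒵] is a prime element of A[𝒵]. -/

import Mathlib

/-!
Modulo `T_{ij}` the monomial `T_i^{μ_i}` vanishes, and the trinomial relations become binomial
relations `T_l^{μ_l} = c_l T_b^{μ_b}` with `c_l ≠ 0`, one for each block `l ∉ {i, b}`, where `b`
is one of the first two blocks. Distinct blocks involve disjoint sets of variables. Such a binomial
ideal, together with `T_{ij}`, is the kernel of a map to the group algebra `k[ℤ^σ / L]`, where `L`
is spanned by the differences of the exponent vectors: it sends each variable to a scalar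
multiple of its class, the scalars being roots of the `c_l` (and `0` for `T_{ij}`). Indeed, every
polynomial is congruent to one supported on the monomials divisible neither by `T_{ij}` nor by
any `T_l^{μ_l}`, and these monomials have pairwise distinct classes in `ℤ^σ / L`. The coprimality
of the gcds makes `ℤ^σ / L` torsion-free, so `k[ℤ^σ / L]` is a domain. Finally `T_{ij}` is not in
the ideal, since all trinomials vanish at a point with all coordinates nonzero.
-/

open MvPolynomial

noncomputable section

/-- The monomial `T_i^{μ_i} = ∏_j T_{ij}^{μ_{ij}}` in the polynomial ring
`k[T_{ij} : 1 ≤ i ≤ s, 1 ≤ j ≤ r_i]`. -/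
def cayleyMonomial (k : Type*) [CommRing k] (s : ℕ) (r : Fin s → ℕ)
    (μ : (i : Fin s) → Fin (r i) → ℕ) (i : Fin s) :
    MvPolynomial (Σ i : Fin s, Fin (r i)) k :=
  ∏ j : Fin (r i), (X ⟨i, j⟩ : MvPolynomial (Σ i : Fin s, Fin (r i)) k) ^ μ i j

/-- The ideal generated by the `s - 2` trinomial relations
`T_i^{μ_i} + T_2^{μ_2} - z_i T_1^{μ_1}` for `3 ≤ i ≤ s` (here `0`-indexed: `2 ≤ i`). -/
def AZIdeal (k : Type*) [CommRing k] (s : ℕ) (hs : 2 ≤ s) (r : Fin s → ℕ)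
    (μ : (i : Fin s) → Fin (r i) → ℕ) (z : Fin s → k) :
    Ideal (MvPolynomial (Σ i : Fin s, Fin (r i)) k) :=
  Ideal.span {p | ∃ i : Fin s, 2 ≤ (i : ℕ) ∧
    p = cayleyMonomial k s r μ i + cayleyMonomial k s r μ ⟨1, by omega⟩
      - C (z i) * cayleyMonomial k s r μ ⟨0, by omega⟩}

/-- The ring `A[𝒵] = k[T_{ij}] / (T_i^{μ_i} + T_2^{μ_2} - z_i T_1^{μ_1} : 3 ≤ i ≤ s)`. -/
def AZRing (k : Type*) [CommRing k] (s : ℕ) (hs : 2 ≤ s) (r : Fin s → ℕ)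
    (μ : (i : Fin s) → Fin (r i) → ℕ) (z : Fin s → k) : Type _ :=
  MvPolynomial (Σ i : Fin s, Fin (r i)) k ⧸ AZIdeal k s hs r μ z

instance (k : Type*) [CommRing k] (s : ℕ) (hs : 2 ≤ s) (r : Fin s → ℕ)
    (μ : (i : Fin s) → Fin (r i) → ℕ) (z : Fin s → k) : CommRing (AZRing k s hs r μ z) :=
  inferInstanceAs (CommRing (MvPolynomial (Σ i : Fin s, Fin (r i)) k ⧸ AZIdeal k s hs r μ z))

instance (k : Type*) [CommRing k] (s : ℕ) (hs : 2 ≤ s) (r : Fin s → ℕ)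
    (μ : (i : Fin s) → Fin (r i) → ℕ) (z : Fin s → k) : Algebra k (AZRing k s hs r μ z) :=
  inferInstanceAs (Algebra k (MvPolynomial (Σ i : Fin s, Fin (r i)) k ⧸ AZIdeal k s hs r μ z))

/-- Admissibility of the data `𝒵`: all `r_i` and `μ_{ij}` are positive, the gcds
`gcd(μ_{i1}, …, μ_{i r_i})` are pairwise coprime, and the `z_i` (for `3 ≤ i ≤ s`,
`0`-indexed `2 ≤ i`) are nonzero and pairwise distinct. -/
def AdmissibleData (k : Type*) [CommRing k] (s : ℕ) (r : Fin s → ℕ)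
    (μ : (i : Fin s) → Fin (r i) → ℕ) (z : Fin s → k) : Prop :=
  (∀ i, 1 ≤ r i) ∧ (∀ (i : Fin s) (j : Fin (r i)), 1 ≤ μ i j) ∧
    (∀ i i' : Fin s, i ≠ i' →
      Nat.Coprime (Finset.univ.gcd (μ i)) (Finset.univ.gcd (μ i'))) ∧
    (∀ i : Fin s, 2 ≤ (i : ℕ) → z i ≠ 0) ∧
    (∀ i i' : Fin s, 2 ≤ (i : ℕ) → 2 ≤ (i' : ℕ) → z i = z i' → i = i')

end

open Function

theorem dvd_of_dvd_mul_of_dvd_sum_mul {R ι : Type*} [CommRing R] [Fintype ι] [DecidableEq ι]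
    {n d₀ : R} {m d : ι → R} (hd : Pairwise (IsCoprime on d)) (hd₀ : ∀ l, IsCoprime (d l) d₀)
    (h : ∀ l, n ∣ m l * d l) (h₀ : n ∣ (∑ l, m l) * d₀) (l : ι) : n ∣ m l := by
  set Q := d₀ * ∏ l' ∈ Finset.univ.erase l, d l'
  have hQ : IsCoprime (d l) Q :=
    (hd₀ l).mul_right (IsCoprime.prod_right fun l' hl' => hd (Finset.ne_of_mem_erase hl').symm)
  have hmQ : n ∣ m l * Q := by
    have hsplit : m l * Q = (∑ l', m l') * Q - ∑ l' ∈ Finset.univ.erase l, m l' * Q := by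
      rw [← Finset.sum_mul, Finset.sum_erase_eq_sub (Finset.mem_univ l)]; ring
    rw [hsplit]
    refine dvd_sub (by simpa only [Q, ← mul_assoc] using h₀.mul_right _)
      (Finset.dvd_sum fun l' hl' => (h l').trans (mul_dvd_mul_left _ ?_))
    exact dvd_mul_of_dvd_right (Finset.dvd_prod_of_mem d hl') _
  obtain ⟨u, v, huv⟩ := hQ
  have hm : m l = u * (m l * d l) + v * (m l * Q) := by linear_combination (-m l) * huv
  rw [hm]
  exact dvd_add ((h l).mul_left u) (hmQ.mul_left v)

theorem Int.dvd_mul_natCast_finsetGcd {β : Type*} {s : Finset β} {f : β → ℕ} {n m : ℤ}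
    (h : ∀ b ∈ s, n ∣ m * f b) : n ∣ m * (s.gcd f : ℕ) := by
  rw [← Int.natAbs_dvd_natAbs, Int.natAbs_mul, Int.natAbs_natCast, ← normalize_eq m.natAbs,
    ← Finset.gcd_mul_left]
  refine Finset.dvd_gcd fun b hb => ?_
  simpa [Int.natAbs_mul] using Int.natAbs_dvd_natAbs.mpr (h b hb)

theorem Ideal.span_range_sup_eq_of_forall_mem {R ι : Type*} [CommRing R] {f g : ι → R}
    {J : Ideal R} (hf : ∀ l, f l ∈ Ideal.span (Set.range g) ⊔ J)
    (hg : ∀ l, g l ∈ Ideal.span (Set.range f) ⊔ J) :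
    Ideal.span (Set.range f) ⊔ J = Ideal.span (Set.range g) ⊔ J :=
  le_antisymm (sup_le (Ideal.span_le.mpr (Set.range_subset_iff.mpr hf)) le_sup_right)
    (sup_le (Ideal.span_le.mpr (Set.range_subset_iff.mpr hg)) le_sup_right)

theorem Ideal.span_range_sup_eq_of_forall_sub_mem {R ι : Type*} [CommRing R] {f g : ι → R}
    {J : Ideal R} (h : ∀ l, f l - g l ∈ J) :
    Ideal.span (Set.range f) ⊔ J = Ideal.span (Set.range g) ⊔ J := by
  refine Ideal.span_range_sup_eq_of_forall_mem (fun l => ?_) (fun l => ?_)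
  · rw [← sub_add_cancel (f l) (g l)]
    exact add_mem (Ideal.mem_sup_right (h l)) (Ideal.mem_sup_left (Ideal.subset_span ⟨l, rfl⟩))
  · rw [← sub_sub_cancel (f l) (g l)]
    exact sub_mem (Ideal.mem_sup_left (Ideal.subset_span ⟨l, rfl⟩)) (Ideal.mem_sup_right (h l))

theorem Ideal.Quotient.prime_mk_of_isPrime_sup {R : Type*} [CommRing R] {I : Ideal R} {x : R}
    (hx : x ∉ I) (h : (I ⊔ Ideal.span {x}).IsPrime) : Prime (Ideal.Quotient.mk I x) := by
  rw [← Ideal.span_singleton_prime (by rwa [Ne, Ideal.Quotient.eq_zero_iff_mem])]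
  have hmap : (I ⊔ Ideal.span {x}).map (Ideal.Quotient.mk I) =
      Ideal.span {Ideal.Quotient.mk I x} := by
    rw [Ideal.map_sup, Ideal.map_quotient_self, bot_sup_eq, Ideal.map_span, Set.image_singleton]
  exact hmap ▸ Ideal.isPrime_map_quotientMk_of_isPrime le_sup_left

section Lattice

variable {σ ι : Type*}

noncomputable def intExp : (σ →₀ ℕ) →+ (σ →₀ ℤ) :=
  Finsupp.mapRange.addMonoidHom (Nat.castAddMonoidHom ℤ)

@[simp] lemma intExp_apply (u : σ →₀ ℕ) (v : σ) : intExp u v = u v := rfl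

variable (a : ι → σ →₀ ℕ) (a₀ : σ →₀ ℕ)

noncomputable def relVector (l : ι) : σ →₀ ℤ := intExp (a l) - intExp a₀

noncomputable def relLattice : Submodule ℤ (σ →₀ ℤ) := Submodule.span ℤ (Set.range (relVector a a₀))

variable {a a₀} [Fintype ι]

lemma sum_smul_relVector_apply_of_mem (hdisj : Pairwise (Disjoint on fun l => (a l).support))
    (hdisj₀ : ∀ l, Disjoint (a l).support a₀.support) (m : ι → ℤ) {l : ι} {v : σ}
    (hv : v ∈ (a l).support) : (∑ l', m l' • relVector a a₀ l') v = m l * a l v := by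
  classical
  have h₀ : a₀ v = 0 := Finsupp.notMem_support_iff.mp (Finset.disjoint_left.mp (hdisj₀ l) hv)
  rw [Finsupp.finsetSum_apply, Finset.sum_eq_single l]
  · simp [relVector, h₀]
  · intro l' _ hl'
    have : a l' v = 0 :=
      Finsupp.notMem_support_iff.mp (Finset.disjoint_right.mp (hdisj hl') hv)
    simp [relVector, h₀, this]
  · simp

lemma sum_smul_relVector_apply_of_mem_base (hdisj₀ : ∀ l, Disjoint (a l).support a₀.support)
    (m : ι → ℤ) {v : σ} (hv : v ∈ a₀.support) :
    (∑ l', m l' • relVector a a₀ l') v = -((∑ l', m l') * a₀ v) := by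
  have h : ∀ l, a l v = 0 := fun l =>
    Finsupp.notMem_support_iff.mp (Finset.disjoint_right.mp (hdisj₀ l) hv)
  simp [relVector, Finsupp.finsetSum_apply, h, Finset.sum_mul]

variable [Fintype σ]

theorem mem_relLattice_of_smul_mem (hdisj : Pairwise (Disjoint on fun l => (a l).support))
    (hdisj₀ : ∀ l, Disjoint (a l).support a₀.support)
    (hgcd : Pairwise (Nat.Coprime on fun l => Finset.univ.gcd (a l)))
    (hgcd₀ : ∀ l, Nat.Coprime (Finset.univ.gcd (a l)) (Finset.univ.gcd a₀))
    {n : ℤ} (hn : n ≠ 0) {w : σ →₀ ℤ} (hw : n • w ∈ relLattice a a₀) : w ∈ relLattice a a₀ := by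
  classical
  obtain ⟨m, hm⟩ := (Submodule.mem_span_range_iff_exists_fun ℤ).mp hw
  have hdvd : ∀ l, n ∣ m l := by
    refine dvd_of_dvd_mul_of_dvd_sum_mul (d := fun l => (Finset.univ.gcd (a l) : ℕ))
      (fun l l' h => Nat.isCoprime_iff_coprime.mpr (hgcd h))
      (fun l => Nat.isCoprime_iff_coprime.mpr (hgcd₀ l))
      (fun l => Int.dvd_mul_natCast_finsetGcd fun v _ => ?_)
      (Int.dvd_mul_natCast_finsetGcd fun v _ => ?_)
    · by_cases hv : v ∈ (a l).support
      · exact ⟨w v, by rw [← sum_smul_relVector_apply_of_mem hdisj hdisj₀ m hv, hm]; simp⟩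
      · simp [Finsupp.notMem_support_iff.mp hv]
    · by_cases hv : v ∈ a₀.support
      · exact dvd_neg.mp ⟨w v, by rw [← sum_smul_relVector_apply_of_mem_base hdisj₀ m hv, hm]; simp⟩
      · simp [Finsupp.notMem_support_iff.mp hv]
  have hw' : w = ∑ l, (m l / n) • relVector a a₀ l := by
    refine smul_right_injective _ hn ?_
    simp only [Finset.smul_sum, smul_smul, Int.mul_ediv_cancel' (hdvd _)]
    exact hm.symm
  rw [hw']
  exact Submodule.sum_mem _ fun l _ => Submodule.smul_mem _ _ (Submodule.subset_span ⟨l, rfl⟩)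

theorem isAddTorsionFree_quotient_relLattice
    (hdisj : Pairwise (Disjoint on fun l => (a l).support))
    (hdisj₀ : ∀ l, Disjoint (a l).support a₀.support)
    (hgcd : Pairwise (Nat.Coprime on fun l => Finset.univ.gcd (a l)))
    (hgcd₀ : ∀ l, Nat.Coprime (Finset.univ.gcd (a l)) (Finset.univ.gcd a₀)) :
    IsAddTorsionFree ((σ →₀ ℤ) ⧸ relLattice a a₀) := by
  refine Module.isTorsionFree_int_iff_isAddTorsionFree.mp
    (Module.IsTorsionFree.of_smul_eq_zero fun n x hx => or_iff_not_imp_left.mpr fun hn => ?_)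
  obtain ⟨w, rfl⟩ := Submodule.Quotient.mk_surjective _ x
  rw [← Submodule.Quotient.mk_smul, Submodule.Quotient.mk_eq_zero] at hx
  rw [Submodule.Quotient.mk_eq_zero]
  exact mem_relLattice_of_smul_mem hdisj hdisj₀ hgcd hgcd₀ hn hx

end Lattice

section BinomialIdeal

variable {k σ ι : Type*} [Field k] (a : ι → σ →₀ ℕ) (a₀ : σ →₀ ℕ)

noncomputable def binomialIdeal (c : ι → k) : Ideal (MvPolynomial σ k) :=
  Ideal.span (Set.range fun l => monomial (a l) 1 - C (c l) * monomial a₀ 1)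

def standardExponents (v₀ : σ) : Set (σ →₀ ℕ) := {u | u v₀ = 0 ∧ ∀ l, ¬ a l ≤ u}

noncomputable def latticeRealization (t : σ → k) :
    MvPolynomial σ k →+* AddMonoidAlgebra k ((σ →₀ ℤ) ⧸ relLattice a a₀) :=
  eval₂Hom AddMonoidAlgebra.singleZeroRingHom fun v =>
    AddMonoidAlgebra.single (Submodule.Quotient.mk (Finsupp.single v 1)) (t v)

variable {a a₀}

lemma latticeRealization_monomial (t : σ → k) (u : σ →₀ ℕ) (b : k) :
    latticeRealization a a₀ t (monomial u b) =
      AddMonoidAlgebra.single (Submodule.Quotient.mk (intExp u))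
        (b * u.prod fun v e => t v ^ e) := by
  have hexp : (Submodule.Quotient.mk (intExp u) : (σ →₀ ℤ) ⧸ relLattice a a₀) =
      u.sum fun v e => e • Submodule.Quotient.mk (Finsupp.single v 1) := by
    conv_lhs => rw [← Finsupp.sum_single u]
    rw [map_finsuppSum, ← Submodule.mkQ_apply, map_finsuppSum]
    simp [intExp, ← Submodule.Quotient.mk_smul]
  simp [latticeRealization, eval₂Hom_monomial, AddMonoidAlgebra.single_pow,
    AddMonoidAlgebra.finsuppProd_single, hexp]

theorem exists_rescaling [IsAlgClosed k] (hdisj : Pairwise (Disjoint on fun l => (a l).support))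
    (hdisj₀ : ∀ l, Disjoint (a l).support a₀.support) (hne : ∀ l, (a l).support.Nonempty)
    {c : ι → k} (hc : ∀ l, c l ≠ 0) {v₀ : σ} (hv₀ : ∀ l, v₀ ∉ (a l).support)
    (hv₀' : v₀ ∉ a₀.support) :
    ∃ t : σ → k, t v₀ = 0 ∧ (∀ v, v ≠ v₀ → t v ≠ 0) ∧
      (∀ l, (a l).prod (fun v e => t v ^ e) = c l) ∧ a₀.prod (fun v e => t v ^ e) = 1 := by
  classical
  choose p hp using hne
  have hpinj : Injective p := fun l l' h => by_contra fun hne =>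
    Finset.disjoint_left.mp (hdisj hne) (hp l) (h ▸ hp l')
  choose ρ hρ using fun l => IsAlgClosed.exists_pow_nat_eq (c l)
    (Nat.pos_of_ne_zero (Finsupp.mem_support_iff.mp (hp l)))
  set t := Function.extend p ρ fun v => if v = v₀ then 0 else 1
  have ht_p : ∀ l, t (p l) = ρ l := fun l => hpinj.extend_apply _ _ l
  have ht_other : ∀ v, (∀ l, p l ≠ v) → t v = if v = v₀ then 0 else 1 := fun v hv =>
    Function.extend_apply' _ _ _ fun ⟨l, hl⟩ => hv l hl
  refine ⟨t, ?_, fun v hv => ?_, fun l => ?_, Finset.prod_eq_one fun v hv => ?_⟩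
  · rw [ht_other v₀ fun l h => hv₀ l (h ▸ hp l), if_pos rfl]
  · by_cases h : ∃ l, p l = v
    · obtain ⟨l, rfl⟩ := h
      rw [ht_p]
      rintro hρ₀
      apply hc l
      rw [← hρ l, hρ₀, zero_pow (Finsupp.mem_support_iff.mp (hp l))]
    · push Not at h
      rw [ht_other v h, if_neg hv]
      exact one_ne_zero
  · refine (Finset.prod_eq_single_of_mem (p l) (hp l) fun v hv hvl => ?_).trans
      (by dsimp only; rw [ht_p, hρ])
    have hp_ne : ∀ l', p l' ≠ v := fun l' hl' => by
      rcases eq_or_ne l' l with rfl | h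
      · exact hvl hl'.symm
      · exact Finset.disjoint_left.mp (hdisj h) (hl' ▸ hp l') hv
    dsimp only
    rw [ht_other v hp_ne, if_neg (by rintro rfl; exact hv₀ l hv), one_pow]
  · have hp_ne : ∀ l, p l ≠ v := fun l hl => Finset.disjoint_left.mp (hdisj₀ l) (hl ▸ hp l) hv
    dsimp only
    rw [ht_other v hp_ne, if_neg (by rintro rfl; exact hv₀' hv), one_pow]

lemma binomialIdeal_sup_span_X_le_ker {c : ι → k} {v₀ : σ} {t : σ → k} (ht₀ : t v₀ = 0)
    (hta : ∀ l, (a l).prod (fun v e => t v ^ e) = c l) (hta₀ : a₀.prod (fun v e => t v ^ e) = 1) :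
    binomialIdeal a a₀ c ⊔ Ideal.span {X v₀} ≤ RingHom.ker (latticeRealization a a₀ t) := by
  refine sup_le (Ideal.span_le.mpr ?_) ((Ideal.span_singleton_le_iff_mem _).mpr ?_)
  · rintro _ ⟨l, rfl⟩
    have hrel : (Submodule.Quotient.mk (intExp (a l)) : (σ →₀ ℤ) ⧸ relLattice a a₀) =
        Submodule.Quotient.mk (intExp a₀) :=
      (Submodule.Quotient.eq _).mpr (Submodule.subset_span ⟨l, rfl⟩)
    simp [C_mul_monomial, latticeRealization_monomial, hrel, hta, hta₀]
  · simp [latticeRealization, ht₀]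

theorem monomial_mem_restrictSupport_standardExponents_sup
    (hdisj₀ : ∀ l, Disjoint (a l).support a₀.support) (hne : ∀ l, (a l).support.Nonempty)
    (c : ι → k) (v₀ : σ) (u : σ →₀ ℕ) (b : k) :
    monomial u b ∈ restrictSupport k (standardExponents a v₀) ⊔
      (binomialIdeal a a₀ c ⊔ Ideal.span {X v₀}).restrictScalars k := by
  classical
  -- the reduction `u ↦ u - a l + a₀` strictly lowers the total degree outside `a₀.support`
  set w : σ → ℕ := fun v => if v ∈ a₀.support then 0 else 1
  have hw₀ : Finsupp.weight w a₀ = 0 := by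
    simp +contextual [Finsupp.weight_apply, Finsupp.sum, w]
  have hwa : ∀ l, 1 ≤ Finsupp.weight w (a l) := fun l => by
    obtain ⟨v, hv⟩ := hne l
    simpa [w, Finsupp.notMem_support_iff.mp (Finset.disjoint_left.mp (hdisj₀ l) hv)] using
      Finsupp.le_weight_of_ne_zero' w (Finsupp.mem_support_iff.mp hv)
  induction hn : Finsupp.weight w u using Nat.strong_induction_on generalizing u b with
  | _ n ih =>
  by_cases h₀ : u v₀ = 0
  · by_cases hred : ∃ l, a l ≤ u
    · obtain ⟨l, hl⟩ := hred
      have hsplit : monomial u b = (monomial (a l) 1 - C (c l) * monomial a₀ 1) *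
          monomial (u - a l) b + monomial (u - a l + a₀) (c l * b) := by
        rw [sub_mul, C_mul_monomial, monomial_mul, monomial_mul, one_mul, mul_one,
          add_tsub_cancel_of_le hl, add_comm a₀]
        ring
      rw [hsplit]
      refine add_mem (Submodule.mem_sup_right ?_) (ih _ ?_ _ _ rfl)
      · rw [Submodule.restrictScalars_mem]
        exact Ideal.mul_mem_right _ _ (Ideal.mem_sup_left (Ideal.subset_span ⟨l, rfl⟩))
      have hwu := congrArg (Finsupp.weight w) (tsub_add_cancel_of_le hl)
      rw [map_add] at hwu
      rw [map_add, hw₀]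
      have := hwa l
      omega
    · exact Submodule.mem_sup_left ((monomial_mem_restrictSupport k).mpr
        (Or.inl ⟨h₀, fun l hl => hred ⟨l, hl⟩⟩))
  · have hle : Finsupp.single v₀ 1 ≤ u :=
      Finsupp.single_le_iff.mpr (Nat.one_le_iff_ne_zero.mpr h₀)
    rw [show monomial u b = X v₀ * monomial (u - Finsupp.single v₀ 1) b by
      rw [X, monomial_mul, one_mul, add_tsub_cancel_of_le hle]]
    refine Submodule.mem_sup_right ?_
    rw [Submodule.restrictScalars_mem]
    exact Ideal.mul_mem_right _ _ (Ideal.mem_sup_right (Ideal.mem_span_singleton_self _))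

lemma eq_of_mk_intExp_eq [Fintype ι] (hdisj : Pairwise (Disjoint on fun l => (a l).support))
    (hdisj₀ : ∀ l, Disjoint (a l).support a₀.support) {u u' : σ →₀ ℕ} (hu : ∀ l, ¬ a l ≤ u)
    (hu' : ∀ l, ¬ a l ≤ u')
    (h : (Submodule.Quotient.mk (intExp u) : (σ →₀ ℤ) ⧸ relLattice a a₀) =
      Submodule.Quotient.mk (intExp u')) : u = u' := by
  rw [Submodule.Quotient.eq] at h
  obtain ⟨m, hm⟩ := (Submodule.mem_span_range_iff_exists_fun ℤ).mp h
  have hcoord : ∀ l, ∀ v ∈ (a l).support, m l * a l v = u v - u' v := fun l v hv => by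
    rw [← sum_smul_relVector_apply_of_mem hdisj hdisj₀ m hv, hm]; simp
  have hm₀ : ∀ l, m l = 0 := by
    intro l
    by_contra hml
    rcases lt_or_gt_of_ne hml with hlt | hgt
    · refine hu' l ((Finsupp.le_iff _ _).mpr fun v hv => ?_)
      have := hcoord l v hv
      have : (a l v : ℤ) ≤ u' v := by nlinarith [(u v).cast_nonneg (α := ℤ)]
      exact_mod_cast this
    · refine hu l ((Finsupp.le_iff _ _).mpr fun v hv => ?_)
      have := hcoord l v hv
      have : (a l v : ℤ) ≤ u v := by nlinarith [(u' v).cast_nonneg (α := ℤ)]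
      exact_mod_cast this
  ext v
  have := DFunLike.congr_fun hm v
  simp [hm₀] at this
  omega

lemma eq_zero_of_latticeRealization_eq_zero [Fintype ι]
    (hdisj : Pairwise (Disjoint on fun l => (a l).support))
    (hdisj₀ : ∀ l, Disjoint (a l).support a₀.support) {v₀ : σ} {t : σ → k}
    (ht : ∀ v, v ≠ v₀ → t v ≠ 0) {g : MvPolynomial σ k}
    (hg : g ∈ restrictSupport k (standardExponents a v₀)) (h : latticeRealization a a₀ t g = 0) :
    g = 0 := by
  classical
  ext u
  rw [coeff_zero]
  by_contra hu
  replace hu : u ∈ g.support := mem_support_iff.mpr hu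
  have hstd : ∀ u ∈ g.support, u ∈ standardExponents a v₀ := fun u hu => hg hu
  have hsum : latticeRealization a a₀ t g = ∑ u' ∈ g.support,
      AddMonoidAlgebra.single (Submodule.Quotient.mk (intExp u'))
        (coeff u' g * u'.prod fun v e => t v ^ e) := by
    conv_lhs => rw [g.as_sum]
    simp only [map_sum, latticeRealization_monomial]
  have hcoeff := congrArg (fun x => x.coeff (Submodule.Quotient.mk (intExp u)))
    (hsum.symm.trans h)
  simp only [AddMonoidAlgebra.coeff_sum, AddMonoidAlgebra.coeff_single, Finsupp.finsetSum_apply,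
    AddMonoidAlgebra.coeff_zero, Finsupp.zero_apply] at hcoeff
  rw [Finset.sum_eq_single u (fun u' hu' hne => Finsupp.single_eq_of_ne (fun heq => hne
      (eq_of_mk_intExp_eq hdisj hdisj₀ (hstd u hu).2 (hstd u' hu').2 heq).symm))
    (fun h => absurd hu h), Finsupp.single_eq_same] at hcoeff
  refine mul_ne_zero (mem_support_iff.mp hu)
    (Finsupp.prod_ne_zero_iff.mpr fun v hv => pow_ne_zero _ (ht v ?_)) hcoeff
  rintro rfl
  exact Finsupp.mem_support_iff.mp hv (hstd u hu).1

theorem isPrime_binomialIdeal_sup_span_X [IsAlgClosed k] [Fintype σ] [Fintype ι]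
    (hdisj : Pairwise (Disjoint on fun l => (a l).support))
    (hdisj₀ : ∀ l, Disjoint (a l).support a₀.support) (hne : ∀ l, (a l).support.Nonempty)
    (hgcd : Pairwise (Nat.Coprime on fun l => Finset.univ.gcd (a l)))
    (hgcd₀ : ∀ l, Nat.Coprime (Finset.univ.gcd (a l)) (Finset.univ.gcd a₀))
    {c : ι → k} (hc : ∀ l, c l ≠ 0) {v₀ : σ} (hv₀ : ∀ l, v₀ ∉ (a l).support)
    (hv₀' : v₀ ∉ a₀.support) :
    (binomialIdeal a a₀ c ⊔ Ideal.span {X v₀}).IsPrime := by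
  obtain ⟨t, ht₀, ht, hta, hta₀⟩ := exists_rescaling hdisj hdisj₀ hne hc hv₀ hv₀'
  have := isAddTorsionFree_quotient_relLattice hdisj hdisj₀ hgcd hgcd₀
  have : AddMonoid.FG ((σ →₀ ℤ) ⧸ relLattice a a₀) :=
    AddGroup.fg_iff_addMonoid_fg.mp (Module.Finite.iff_addGroup_fg.mp inferInstance)
  have hle := binomialIdeal_sup_span_X_le_ker (a := a) (a₀ := a₀) ht₀ hta hta₀
  suffices RingHom.ker (latticeRealization a a₀ t) = binomialIdeal a a₀ c ⊔ Ideal.span {X v₀} from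
    this ▸ RingHom.ker_isPrime _
  refine le_antisymm (fun f hf => ?_) hle
  have hf' : f ∈ restrictSupport k (standardExponents a v₀) ⊔
      (binomialIdeal a a₀ c ⊔ Ideal.span {X v₀}).restrictScalars k := by
    rw [f.as_sum]
    exact Submodule.sum_mem _ fun u _ =>
      monomial_mem_restrictSupport_standardExponents_sup hdisj₀ hne c v₀ u _
  obtain ⟨g, hg, h, hh, rfl⟩ := Submodule.mem_sup.mp hf'
  have hg0 : g = 0 := by
    refine eq_zero_of_latticeRealization_eq_zero hdisj hdisj₀ ht hg ?_
    simpa [RingHom.mem_ker.mp (hle hh)] using RingHom.mem_ker.mp hf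
  rwa [hg0, zero_add]

end BinomialIdeal

section Cayley

variable {k : Type*} [Field k] {s : ℕ} {r : Fin s → ℕ} {μ : (i : Fin s) → Fin (r i) → ℕ}

variable (r μ) in
noncomputable def cayleyExponent (i : Fin s) : (Σ i : Fin s, Fin (r i)) →₀ ℕ :=
  Finsupp.equivFunOnFinite.symm fun v => if v.1 = i then μ v.1 v.2 else 0

@[simp] lemma cayleyExponent_apply (i : Fin s) (v : Σ i : Fin s, Fin (r i)) :
    cayleyExponent r μ i v = if v.1 = i then μ v.1 v.2 else 0 := rfl

lemma cayleyMonomial_eq_monomial (i : Fin s) :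
    cayleyMonomial k s r μ i = monomial (cayleyExponent r μ i) 1 := by
  classical
  rw [cayleyMonomial, monomial_eq, C_1, one_mul, Finsupp.prod_fintype _ _ (fun _ => pow_zero _),
    Fintype.prod_sigma, Finset.prod_eq_single i (fun i' _ hi' => by simp [hi']) (by simp)]
  simp

lemma fst_eq_of_mem_support_cayleyExponent {i : Fin s} {v : Σ i : Fin s, Fin (r i)}
    (hv : v ∈ (cayleyExponent r μ i).support) : v.1 = i := by
  by_contra h
  simp [h] at hv

lemma mem_support_cayleyExponent (hμ : ∀ i j, 1 ≤ μ i j) (i : Fin s) (j : Fin (r i)) :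
    ⟨i, j⟩ ∈ (cayleyExponent r μ i).support := by
  simpa using Nat.one_le_iff_ne_zero.mp (hμ i j)

lemma disjoint_support_cayleyExponent {i i' : Fin s} (h : i ≠ i') :
    Disjoint (cayleyExponent r μ i).support (cayleyExponent r μ i').support :=
  Finset.disjoint_left.mpr fun _ hv hv' => h ((fst_eq_of_mem_support_cayleyExponent hv).symm.trans
    (fst_eq_of_mem_support_cayleyExponent hv'))

lemma gcd_cayleyExponent (i : Fin s) :
    Finset.univ.gcd (cayleyExponent r μ i) = Finset.univ.gcd (μ i) := by
  refine Nat.dvd_antisymm (Finset.dvd_gcd fun j _ => ?_) (Finset.dvd_gcd fun ⟨i', j'⟩ _ => ?_)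
  · simpa using Finset.gcd_dvd (f := cayleyExponent r μ i) (Finset.mem_univ ⟨i, j⟩)
  · rcases eq_or_ne i' i with rfl | h
    · simpa using Finset.gcd_dvd (Finset.mem_univ j')
    · simp [h]

lemma X_dvd_cayleyMonomial (hμ : ∀ i j, 1 ≤ μ i j) (i : Fin s) (j : Fin (r i)) :
    (X ⟨i, j⟩ : MvPolynomial (Σ i : Fin s, Fin (r i)) k) ∣ cayleyMonomial k s r μ i :=
  (dvd_pow_self _ (Nat.one_le_iff_ne_zero.mp (hμ i j))).trans
    (Finset.dvd_prod_of_mem _ (Finset.mem_univ j))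

theorem isPrime_binomialIdeal_cayleyExponent [IsAlgClosed k] (hr : ∀ i, 1 ≤ r i)
    (hμ : ∀ i j, 1 ≤ μ i j)
    (hgcd : ∀ i i' : Fin s, i ≠ i' → Nat.Coprime (Finset.univ.gcd (μ i)) (Finset.univ.gcd (μ i')))
    {ι : Type*} [Fintype ι] {β : ι → Fin s} (hβ : Injective β) {b i : Fin s}
    (hb : ∀ l, β l ≠ b) (hi : ∀ l, β l ≠ i) (hbi : b ≠ i) {c : ι → k} (hc : ∀ l, c l ≠ 0)
    (j : Fin (r i)) :
    (binomialIdeal (fun l => cayleyExponent r μ (β l)) (cayleyExponent r μ b) c ⊔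
      Ideal.span {X ⟨i, j⟩}).IsPrime := by
  refine isPrime_binomialIdeal_sup_span_X
    (fun l l' h => disjoint_support_cayleyExponent (hβ.ne h))
    (fun l => disjoint_support_cayleyExponent (hb l))
    (fun l => ⟨_, mem_support_cayleyExponent hμ (β l) ⟨0, hr (β l)⟩⟩)
    (fun l l' h => ?_) (fun l => ?_) hc
    (fun l hv => hi l (fst_eq_of_mem_support_cayleyExponent hv).symm)
    (fun hv => hbi (fst_eq_of_mem_support_cayleyExponent hv).symm)
  · simpa only [onFun, gcd_cayleyExponent] using hgcd _ _ (hβ.ne h)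
  · simpa only [gcd_cayleyExponent] using hgcd _ _ (hb l)

end Cayley

section AZ

variable {k : Type*} [Field k] {s : ℕ} {r : Fin s → ℕ} {μ : (i : Fin s) → Fin (r i) → ℕ}

lemma AZIdeal_eq_span_range (hs : 2 ≤ s) (z : Fin s → k) :
    AZIdeal k s hs r μ z = Ideal.span (Set.range fun l : {l : Fin s // 2 ≤ (l : ℕ)} =>
      cayleyMonomial k s r μ l + cayleyMonomial k s r μ ⟨1, by omega⟩
        - C (z l) * cayleyMonomial k s r μ ⟨0, by omega⟩) :=
  congrArg Ideal.span <| Set.ext fun _ =>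
    ⟨fun ⟨i, hi, hp⟩ => ⟨⟨i, hi⟩, hp.symm⟩, fun ⟨l, hl⟩ => ⟨l.1, l.2, hl.symm⟩⟩

theorem isPrime_AZIdeal_sup_span_X_of_eq_zero [IsAlgClosed k] (hs : 2 ≤ s) {z : Fin s → k}
    (hadm : AdmissibleData k s r μ z) {i : Fin s} (hi : (i : ℕ) = 0) (j : Fin (r i)) :
    (AZIdeal k s hs r μ z ⊔ Ideal.span {X ⟨i, j⟩}).IsPrime := by
  obtain ⟨hr, hμ, hgcd, -, -⟩ := hadm
  obtain rfl : i = ⟨0, zero_lt_two.trans_le hs⟩ := Fin.ext hi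
  have heq : AZIdeal k s hs r μ z ⊔ Ideal.span {X ⟨_, j⟩} =
      binomialIdeal (fun l : {l : Fin s // 2 ≤ (l : ℕ)} => cayleyExponent r μ l)
        (cayleyExponent r μ ⟨1, by omega⟩) (fun _ => -1) ⊔ Ideal.span {X ⟨_, j⟩} := by
    rw [AZIdeal_eq_span_range, binomialIdeal]
    simp only [← cayleyMonomial_eq_monomial]
    refine Ideal.span_range_sup_eq_of_forall_sub_mem fun l => ?_
    convert Ideal.mul_mem_left _ (-C (z l))
      (Ideal.mem_span_singleton.mpr (X_dvd_cayleyMonomial hμ _ j)) using 1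
    simp only [map_neg, map_one]
    ring
  rw [heq]
  refine isPrime_binomialIdeal_cayleyExponent hr hμ hgcd Subtype.val_injective
    (fun l h => ?_) (fun l h => ?_) (by simp [Fin.ext_iff]) (fun _ => neg_ne_zero.mpr one_ne_zero) j
  all_goals have := l.2; simp only [Fin.ext_iff] at h; omega

theorem isPrime_AZIdeal_sup_span_X_of_eq_one [IsAlgClosed k] (hs : 2 ≤ s) {z : Fin s → k}
    (hadm : AdmissibleData k s r μ z) {i : Fin s} (hi : (i : ℕ) = 1) (j : Fin (r i)) :
    (AZIdeal k s hs r μ z ⊔ Ideal.span {X ⟨i, j⟩}).IsPrime := by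
  obtain ⟨hr, hμ, hgcd, hz, -⟩ := hadm
  obtain rfl : i = ⟨1, one_lt_two.trans_le hs⟩ := Fin.ext hi
  have heq : AZIdeal k s hs r μ z ⊔ Ideal.span {X ⟨_, j⟩} =
      binomialIdeal (fun l : {l : Fin s // 2 ≤ (l : ℕ)} => cayleyExponent r μ l)
        (cayleyExponent r μ ⟨0, by omega⟩) (fun l => z l) ⊔ Ideal.span {X ⟨_, j⟩} := by
    rw [AZIdeal_eq_span_range, binomialIdeal]
    simp only [← cayleyMonomial_eq_monomial]
    refine Ideal.span_range_sup_eq_of_forall_sub_mem fun l => ?_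
    convert Ideal.mem_span_singleton.mpr (X_dvd_cayleyMonomial hμ _ j) using 1
    ring
  rw [heq]
  refine isPrime_binomialIdeal_cayleyExponent hr hμ hgcd Subtype.val_injective
    (fun l h => ?_) (fun l h => ?_) (by simp [Fin.ext_iff]) (fun l => hz l.1 l.2) j
  all_goals have := l.2; simp only [Fin.ext_iff] at h; omega

-- Modulo `T_i^{μ_i}`, the relation of block `i` becomes `T_1^{μ_1} = z_i T_0^{μ_0}` (placed in the
-- slot `l = i`), and subtracting it from the relation of block `l` gives
-- `T_l^{μ_l} = (z_l - z_i) T_0^{μ_0}`.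
lemma AZIdeal_sup_span_X_eq_of_two_le (hs : 2 ≤ s) (z : Fin s → k) (hμ : ∀ i j, 1 ≤ μ i j)
    {i : Fin s} (hi : 2 ≤ (i : ℕ)) (j : Fin (r i)) :
    AZIdeal k s hs r μ z ⊔ Ideal.span {X ⟨i, j⟩} =
      binomialIdeal (fun l : {l : Fin s // 2 ≤ (l : ℕ)} =>
          cayleyExponent r μ (if l.1 = i then ⟨1, by omega⟩ else l.1))
        (cayleyExponent r μ ⟨0, by omega⟩) (fun l => if l.1 = i then z i else z l - z i) ⊔
        Ideal.span {X ⟨i, j⟩} := by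
  rw [AZIdeal_eq_span_range, binomialIdeal]
  simp only [← cayleyMonomial_eq_monomial]
  set M := cayleyMonomial k s r μ
  set iₛ : {l : Fin s // 2 ≤ (l : ℕ)} := ⟨i, hi⟩
  set f := fun l : {l : Fin s // 2 ≤ (l : ℕ)} =>
    M l + M ⟨1, by omega⟩ - C (z l) * M ⟨0, by omega⟩
  set g := fun l : {l : Fin s // 2 ≤ (l : ℕ)} =>
    M (if l.1 = i then ⟨1, by omega⟩ else l.1) -
      C (if l.1 = i then z i else z l - z i) * M ⟨0, by omega⟩
  have hMi : ∀ J : Ideal _, M i ∈ J ⊔ Ideal.span {X ⟨i, j⟩} := fun _ =>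
    Ideal.mem_sup_right (Ideal.mem_span_singleton.mpr (X_dvd_cayleyMonomial hμ i j))
  have hf : ∀ l, f l ∈ Ideal.span (Set.range f) ⊔ Ideal.span {X ⟨i, j⟩} := fun l =>
    Ideal.mem_sup_left (Ideal.subset_span ⟨l, rfl⟩)
  have hg : ∀ l, g l ∈ Ideal.span (Set.range g) ⊔ Ideal.span {X ⟨i, j⟩} := fun l =>
    Ideal.mem_sup_left (Ideal.subset_span ⟨l, rfl⟩)
  have hgi : g iₛ = M ⟨1, by omega⟩ - C (z i) * M ⟨0, by omega⟩ := by simp [g, iₛ]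
  have hgl : ∀ l, l.1 ≠ i → g l = M l - (C (z l) - C (z i)) * M ⟨0, by omega⟩ := fun l hl => by
    simp [g, hl]
  refine Ideal.span_range_sup_eq_of_forall_mem (fun l => ?_) (fun l => ?_)
  · by_cases hl : l.1 = i
    · obtain rfl : l = iₛ := Subtype.ext hl
      rw [show f iₛ = M i + g iₛ by rw [hgi]; simp only [f, iₛ]; ring]
      exact add_mem (hMi _) (hg iₛ)
    · rw [show f l = g l + g iₛ by rw [hgl l hl, hgi]; simp only [f]; ring]
      exact add_mem (hg l) (hg iₛ)
  · by_cases hl : l.1 = i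
    · obtain rfl : l = iₛ := Subtype.ext hl
      rw [show g iₛ = f iₛ - M i by rw [hgi]; simp only [f, iₛ]; ring]
      exact sub_mem (hf iₛ) (hMi _)
    · rw [show g l = f l - f iₛ + M i by rw [hgl l hl]; simp only [f, iₛ]; ring]
      exact add_mem (sub_mem (hf l) (hf iₛ)) (hMi _)

theorem isPrime_AZIdeal_sup_span_X_of_two_le [IsAlgClosed k] (hs : 2 ≤ s) {z : Fin s → k}
    (hadm : AdmissibleData k s r μ z) {i : Fin s} (hi : 2 ≤ (i : ℕ)) (j : Fin (r i)) :
    (AZIdeal k s hs r μ z ⊔ Ideal.span {X ⟨i, j⟩}).IsPrime := by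
  obtain ⟨hr, hμ, hgcd, hz, hzinj⟩ := hadm
  rw [AZIdeal_sup_span_X_eq_of_two_le hs z hμ hi j]
  refine isPrime_binomialIdeal_cayleyExponent hr hμ hgcd (fun l l' h => ?_) (fun l h => ?_)
    (fun l h => ?_) (fun h => ?_) (fun l => ?_) j
  · have := l.2
    have := l'.2
    split_ifs at h <;> simp only [Subtype.ext_iff, Fin.ext_iff] at * <;> omega
  · have := l.2
    split_ifs at h <;> simp only [Fin.ext_iff] at * <;> omega
  · have := l.2
    split_ifs at h <;> simp only [Fin.ext_iff] at * <;> omega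
  · simp only [Fin.ext_iff] at h
    omega
  · split_ifs with h₁
    · exact hz i hi
    · exact sub_ne_zero.mpr fun h => h₁ (hzinj _ _ l.2 hi h)

theorem exists_eval_cayleyMonomial_eq [IsAlgClosed k] (hr : ∀ i, 1 ≤ r i)
    (hμ : ∀ i j, 1 ≤ μ i j) {w : Fin s → k} (hw : ∀ i, w i ≠ 0) :
    ∃ x : (Σ i : Fin s, Fin (r i)) → k, (∀ v, x v ≠ 0) ∧
      ∀ i, eval x (cayleyMonomial k s r μ i) = w i := by
  classical
  choose ρ hρ using fun i => IsAlgClosed.exists_pow_nat_eq (w i) (hμ i ⟨0, hr i⟩)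
  refine ⟨fun v => if v.2 = ⟨0, hr v.1⟩ then ρ v.1 else 1, fun v => ?_, fun i => ?_⟩
  · dsimp only
    split_ifs
    · rintro h
      exact hw v.1 (by rw [← hρ, h, zero_pow (Nat.one_le_iff_ne_zero.mp (hμ _ _))])
    · exact one_ne_zero
  · rw [cayleyMonomial, map_prod, Finset.prod_eq_single ⟨0, hr i⟩ (fun j _ hj => by simp [hj])
      (by simp)]
    simp [hρ]

theorem X_notMem_AZIdeal [IsAlgClosed k] (hs : 2 ≤ s) {z : Fin s → k}
    (hadm : AdmissibleData k s r μ z) (i : Fin s) (j : Fin (r i)) :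
    X ⟨i, j⟩ ∉ AZIdeal k s hs r μ z := by
  classical
  obtain ⟨hr, hμ, -, -, -⟩ := hadm
  obtain ⟨t, ht⟩ := Infinite.exists_notMem_finset (insert 0 (Finset.univ.image z))
  simp only [Finset.mem_insert, Finset.mem_image, Finset.mem_univ, true_and, not_or] at ht
  obtain ⟨x, hx, hxM⟩ := exists_eval_cayleyMonomial_eq hr hμ
    (w := fun l => if (l : ℕ) = 0 then 1 else if (l : ℕ) = 1 then t else z l - t) fun l => by
      split_ifs
      · exact one_ne_zero
      · exact ht.1
      · exact sub_ne_zero.mpr fun h => ht.2 ⟨l, h⟩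
  have hker : AZIdeal k s hs r μ z ≤ RingHom.ker (eval x) := by
    refine Ideal.span_le.mpr ?_
    rintro _ ⟨l, hl, rfl⟩
    simp only [SetLike.mem_coe, RingHom.mem_ker, map_sub, map_add, map_mul, eval_C, hxM]
    simp [show (l : ℕ) ≠ 0 by omega, show (l : ℕ) ≠ 1 by omega]
  exact fun hX => hx ⟨i, j⟩ (by simpa using hker hX)

end AZ

theorem AZRing_variable_prime_general (k : Type) [Field k] [IsAlgClosed k]
    (s : ℕ) (hs : 2 ≤ s) (r : Fin s → ℕ) (μ : (i : Fin s) → Fin (r i) → ℕ) (z : Fin s → k)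
    (hadm : AdmissibleData k s r μ z) (i : Fin s) (j : Fin (r i)) :
    Prime (Ideal.Quotient.mk (AZIdeal k s hs r μ z)
      (X ⟨i, j⟩ : MvPolynomial (Σ i : Fin s, Fin (r i)) k)) := by
  refine Ideal.Quotient.prime_mk_of_isPrime_sup (X_notMem_AZIdeal hs hadm i j) ?_
  rcases (by omega : (i : ℕ) = 0 ∨ (i : ℕ) = 1 ∨ 2 ≤ (i : ℕ)) with hi | hi | hi
  · exact isPrime_AZIdeal_sup_span_X_of_eq_zero hs hadm hi j
  · exact isPrime_AZIdeal_sup_span_X_of_eq_one hs hadm hi j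
  · exact isPrime_AZIdeal_sup_span_X_of_two_le hs hadm hi j

theorem AZRing_variable_prime (k : Type) [Field k] [IsAlgClosed k] [CharZero k]
    (s : ℕ) (hs : 2 ≤ s) (r : Fin s → ℕ) (μ : (i : Fin s) → Fin (r i) → ℕ) (z : Fin s → k)
    (hadm : AdmissibleData k s r μ z) (i : Fin s) (j : Fin (r i)) :
    Prime (Ideal.Quotient.mk (AZIdeal k s hs r μ z)
      (X ⟨i, j⟩ : MvPolynomial (Σ i : Fin s, Fin (r i)) k)) :=
  AZRing_variable_prime_general k s hs r μ z hadm i j
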